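/- arXiv:1609.01700 — 8 statements merged into one kernel-verified Lean document; each statement's English description precedes it below -/
import Mathlib

section
/- The set A = {0, 1, 3, 4, 5, 8} of integers is not symmetric but satisfies |A + A| = |A - A| = 15. -/
open Pointwise

theorem stmt_8 :
    let A : Finset ℤ := {0, 1, 3, 4, 5, 8}
    (¬ ∃ w : ℤ, ∀ a : ℤ, a ∈ A ↔ w - a ∈ A) ∧
    (A + A).card = 15 ∧ (A - A).card = 15 := by
  intro A
  refine ⟨?_, by decide, by decide⟩
  rintro ⟨w, h⟩
  have h0 : w ∈ A := by have := (h 0).mp (by decide); simpa using this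
  have h1 : w - 1 ∈ A := (h 1).mp (by decide)
  have h8 : w - 8 ∈ A := (h 8).mp (by decide)
  fin_cases h0 <;> revert h1 h8 <;> decide
end

section
/- Let A = {a_0, a_1, ..., a_{k-1}} be a set of k integers with 0 = a_0 < a_1 < ... < a_{k-1}, and let a_k be an integer with a_k > 2·a_{k-1}. If A' = A ∪ {a_k}, then |A' + A'| = |A + A| + k + 1. -/
open Pointwise

theorem stmt_9 (A : Finset ℤ) (k : ℕ) (hA : A.Nonempty) (hk : A.card = k)
    (hmin : A.min' hA = 0) (b : ℤ) (hb : 2 * A.max' hA < b) :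
    (insert b A + insert b A).card = (A + A).card + k + 1 := by
  set M := A.max' hA with hM
  have hpos : ∀ a ∈ A, 0 ≤ a := fun a ha => hmin ▸ A.min'_le a ha
  have hle : ∀ a ∈ A, a ≤ M := fun a ha => A.le_max' a ha
  have hM0 : (0:ℤ) ≤ M := hpos M (A.max'_mem hA)
  have hbM : M < b := by linarith
  set I : Finset ℤ := A.image (fun a => b + a) with hI
  have hIcard : I.card = k := by
    rw [hI, Finset.card_image_of_injective _ (add_right_injective b), hk]
  have hEq : insert b A + insert b A = (A + A) ∪ I ∪ {2 * b} := by
    ext x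
    simp only [Finset.mem_add, Finset.mem_insert, Finset.mem_union,
      Finset.mem_singleton, hI, Finset.mem_image]
    constructor
    · rintro ⟨u, (rfl | hu), v, (rfl | hv), rfl⟩
      · right; ring
      · left; right; exact ⟨v, hv, rfl⟩
      · left; right; exact ⟨u, hu, by ring⟩
      · left; left; exact ⟨u, hu, v, hv, rfl⟩
    · rintro ((⟨u, hu, v, hv, rfl⟩ | ⟨a, ha, rfl⟩) | rfl)
      · exact ⟨u, Or.inr hu, v, Or.inr hv, rfl⟩
      · exact ⟨b, Or.inl rfl, a, Or.inr ha, rfl⟩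
      · exact ⟨b, Or.inl rfl, b, Or.inl rfl, by ring⟩
  have hd1 : Disjoint (A + A) I := by
    rw [Finset.disjoint_left]
    rintro x hx hx'
    rw [Finset.mem_add] at hx
    obtain ⟨u, hu, v, hv, rfl⟩ := hx
    rw [hI, Finset.mem_image] at hx'
    obtain ⟨a, ha, heq⟩ := hx'
    have := hle u hu; have := hle v hv; have := hpos a ha
    linarith
  have hd2 : Disjoint ((A + A) ∪ I) ({2 * b} : Finset ℤ) := by
    rw [Finset.disjoint_right]
    intro x hx2 hx
    rw [Finset.mem_singleton] at hx2
    subst hx2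
    rcases Finset.mem_union.mp hx with hx | hx
    · rw [Finset.mem_add] at hx
      obtain ⟨u, hu, v, hv, heq⟩ := hx
      have := hle u hu; have := hle v hv
      linarith
    · rw [hI, Finset.mem_image] at hx
      obtain ⟨a, ha, heq⟩ := hx
      have := hle a ha
      linarith
  rw [hEq, Finset.card_union_of_disjoint hd2, Finset.card_union_of_disjoint hd1,
    hIcard, Finset.card_singleton]
end

section
/- Let A = {a_0, a_1, ..., a_{k-1}} be a set of k integers with 0 = a_0 < a_1 < ... < a_{k-1}, and let a_k be an integer with a_k > 2·a_{k-1}. If A' = A ∪ {a_k}, then |A' - A'| = |A - A| + 2k. -/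
open Pointwise

theorem stmt_10 (A : Finset ℤ) (k : ℕ) (hA : A.Nonempty) (hk : A.card = k)
    (hmin : A.min' hA = 0) (b : ℤ) (hb : 2 * A.max' hA < b) :
    (insert b A - insert b A).card = (A - A).card + 2 * k := by
  set M := A.max' hA with hM
  have hM0 : (0:ℤ) ≤ M := by
    have := A.min'_le _ (A.max'_mem hA)
    rw [hmin] at this; exact this
  have hlb : ∀ a ∈ A, 0 ≤ a := fun a ha => by
    have := A.min'_le a ha; rw [hmin] at this; exact this
  have hub : ∀ a ∈ A, a ≤ M := fun a ha => A.le_max' a ha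
  have h0A : (0:ℤ) ∈ A := hmin ▸ A.min'_mem hA
  have key : insert b A - insert b A
      = (A - A) ∪ ((A.image (b - ·)) ∪ (A.image (· - b))) := by
    ext x
    simp only [Finset.mem_sub, Finset.mem_insert, Finset.mem_union, Finset.mem_image]
    constructor
    · rintro ⟨u, (rfl | hu), v, (rfl | hv), rfl⟩
      · left; exact ⟨0, h0A, 0, h0A, by ring⟩
      · right; left; exact ⟨v, hv, rfl⟩
      · right; right; exact ⟨u, hu, rfl⟩
      · left; exact ⟨u, hu, v, hv, rfl⟩
    · rintro (⟨u, hu, v, hv, rfl⟩ | ⟨a, ha, rfl⟩ | ⟨a, ha, rfl⟩)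
      · exact ⟨u, Or.inr hu, v, Or.inr hv, rfl⟩
      · exact ⟨b, Or.inl rfl, a, Or.inr ha, rfl⟩
      · exact ⟨a, Or.inr ha, b, Or.inl rfl, rfl⟩
  have hbig : ∀ x ∈ A.image (b - ·), M < x := by
    intro x hx
    simp only [Finset.mem_image] at hx
    obtain ⟨a, ha, rfl⟩ := hx
    have := hub a ha
    linarith
  have hsmall : ∀ x ∈ A.image (· - b), x < -M := by
    intro x hx
    simp only [Finset.mem_image] at hx
    obtain ⟨a, ha, rfl⟩ := hx
    have := hub a ha
    linarith
  have hmid : ∀ x ∈ A - A, -M ≤ x ∧ x ≤ M := by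
    intro x hx
    rw [Finset.mem_sub] at hx
    obtain ⟨u, hu, v, hv, rfl⟩ := hx
    constructor
    · have := hub v hv; have := hlb u hu; linarith
    · have := hub u hu; have := hlb v hv; linarith
  have d1 : Disjoint (A - A) ((A.image (b - ·)) ∪ (A.image (· - b))) := by
    rw [Finset.disjoint_left]
    intro x hx hx'
    obtain ⟨h1, h2⟩ := hmid x hx
    rcases Finset.mem_union.mp hx' with h | h
    · exact absurd (hbig x h) (by linarith)
    · exact absurd (hsmall x h) (by linarith)
  have d2 : Disjoint (A.image (b - ·)) (A.image (· - b)) := by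
    rw [Finset.disjoint_left]
    intro x hx hx'
    have := hbig x hx
    have := hsmall x hx'
    linarith
  rw [key, Finset.card_union_of_disjoint d1, Finset.card_union_of_disjoint d2,
    Finset.card_image_of_injective _ (fun u v h => by linarith),
    Finset.card_image_of_injective _ (fun u v h => by linarith),
    hk]
  ring
end

section
/- Let A be a set of k integers with min(A) = 0 and max element a_{k-1}, and let a_k > 2·a_{k-1}. Setting A' = A ∪ {a_k} and Δ(S) = |S - S| - |S + S| for finite sets S of integers, we have Δ(A') - Δ(A) = k - 1. -/
open Pointwise

theorem stmt_11 (A : Finset ℤ) (k : ℕ) (hA : A.Nonempty) (hk : A.card = k)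
    (hmin : A.min' hA = 0) (b : ℤ) (hb : 2 * A.max' hA < b) :
    (((insert b A - insert b A).card : ℤ) - ((insert b A + insert b A).card : ℤ))
      - (((A - A).card : ℤ) - ((A + A).card : ℤ)) = (k : ℤ) - 1 := by
  set m := A.max' hA with hm
  have hbound : ∀ a ∈ A, 0 ≤ a ∧ a ≤ m := fun a ha =>
    ⟨hmin ▸ A.min'_le a ha, A.le_max' a ha⟩
  have hm0 : 0 ≤ m := (hbound m (A.max'_mem hA)).1
  -- sumset decomposition
  have hadd : insert b A + insert b A = insert (b + b) (A.image (b + ·) ∪ (A + A)) := by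
    ext x
    simp only [Finset.mem_insert, Finset.mem_add, Finset.mem_union, Finset.mem_image]
    constructor
    · rintro ⟨y, hy, z, hz, rfl⟩
      rcases hy with rfl | hy <;> rcases hz with rfl | hz
      · exact Or.inl rfl
      · exact Or.inr (Or.inl ⟨z, hz, rfl⟩)
      · exact Or.inr (Or.inl ⟨y, hy, by ring⟩)
      · exact Or.inr (Or.inr ⟨y, hy, z, hz, rfl⟩)
    · rintro (rfl | ⟨a, ha, rfl⟩ | ⟨y, hy, z, hz, rfl⟩)
      · exact ⟨b, Or.inl rfl, b, Or.inl rfl, rfl⟩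
      · exact ⟨b, Or.inl rfl, a, Or.inr ha, rfl⟩
      · exact ⟨y, Or.inr hy, z, Or.inr hz, rfl⟩
  -- difference set decomposition
  have hsub : insert b A - insert b A = (A - A) ∪ (A.image (b - ·) ∪ A.image (· - b)) := by
    ext x
    simp only [Finset.mem_sub, Finset.mem_insert, Finset.mem_union, Finset.mem_image]
    constructor
    · rintro ⟨y, hy, z, hz, rfl⟩
      rcases hy with rfl | hy <;> rcases hz with rfl | hz
      · exact Or.inl ⟨m, A.max'_mem hA, m, A.max'_mem hA, by ring⟩
      · exact Or.inr (Or.inl ⟨z, hz, rfl⟩)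
      · exact Or.inr (Or.inr ⟨y, hy, rfl⟩)
      · exact Or.inl ⟨y, hy, z, hz, rfl⟩
    · rintro (⟨y, hy, z, hz, rfl⟩ | ⟨a, ha, rfl⟩ | ⟨a, ha, rfl⟩)
      · exact ⟨y, Or.inr hy, z, Or.inr hz, rfl⟩
      · exact ⟨b, Or.inl rfl, a, Or.inr ha, rfl⟩
      · exact ⟨a, Or.inr ha, b, Or.inl rfl, rfl⟩
  -- bounds on the pieces
  have hAA_add : ∀ x ∈ A + A, 0 ≤ x ∧ x ≤ 2 * m := by
    intro x hx
    rw [Finset.mem_add] at hx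
    obtain ⟨y, hy, z, hz, rfl⟩ := hx
    have := hbound y hy; have := hbound z hz; omega
  have hAA_sub : ∀ x ∈ A - A, -m ≤ x ∧ x ≤ m := by
    intro x hx
    rw [Finset.mem_sub] at hx
    obtain ⟨y, hy, z, hz, rfl⟩ := hx
    have := hbound y hy; have := hbound z hz; omega
  -- cardinality of the sumset
  have hcard_add : (insert b A + insert b A).card = (A + A).card + k + 1 := by
    rw [hadd, Finset.card_insert_of_notMem, Finset.card_union_of_disjoint,
      Finset.card_image_of_injective _ (add_right_injective b), hk]
    · omega
    · rw [Finset.disjoint_left]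
      rintro x hx hx'
      simp only [Finset.mem_image] at hx
      obtain ⟨a, ha, rfl⟩ := hx
      have := hbound a ha
      have := hAA_add _ hx'
      omega
    · simp only [Finset.mem_union, Finset.mem_image, Finset.mem_add, not_or]
      constructor
      · rintro ⟨a, ha, h⟩
        have := hbound a ha; omega
      · rintro ⟨y, hy, z, hz, h⟩
        have := hbound y hy; have := hbound z hz; omega
  -- cardinality of the difference set
  have hcard_sub : (insert b A - insert b A).card = (A - A).card + 2 * k := by
    have hinj1 : Function.Injective (fun a : ℤ => b - a) := fun x y h => by
      simpa using h
    have hinj2 : Function.Injective (fun a : ℤ => a - b) := fun x y h => by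
      simpa using h
    rw [hsub, Finset.card_union_of_disjoint, Finset.card_union_of_disjoint,
      Finset.card_image_of_injective _ hinj1, Finset.card_image_of_injective _ hinj2, hk]
    · omega
    · rw [Finset.disjoint_left]
      rintro x hx hx'
      simp only [Finset.mem_image] at hx hx'
      obtain ⟨a, ha, rfl⟩ := hx
      obtain ⟨a', ha', h⟩ := hx'
      have := hbound a ha; have := hbound a' ha'; omega
    · rw [Finset.disjoint_left]
      rintro x hx hx'
      have h1 := hAA_sub _ hx
      simp only [Finset.mem_union, Finset.mem_image] at hx'
      rcases hx' with ⟨a, ha, rfl⟩ | ⟨a, ha, rfl⟩ <;>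
        [have := hbound a ha; have := hbound a ha] <;> omega
  rw [hcard_add, hcard_sub]
  push_cast
  ring
end

section
/- Let B be a finite set of integers with min(B) = 0, |B| = ℓ, max(B) = b, and |B + B| ≥ |B - B| + ℓ. Then for every integer b' > 2b, the set B ∪ {b'} is an MSTD set of cardinality ℓ + 1, i.e., |(B ∪ {b'}) + (B ∪ {b'})| > |(B ∪ {b'}) - (B ∪ {b'})|. -/
open Pointwise

theorem stmt_12 (B : Finset ℤ) (ℓ : ℕ) (hB : B.Nonempty) (hcard : B.card = ℓ)
    (hmin : B.min' hB = 0)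
    (hsum : (B - B).card + ℓ ≤ (B + B).card)
    (b' : ℤ) (hb' : 2 * B.max' hB < b') :
    (insert b' B).card = ℓ + 1 ∧
    ((insert b' B) - (insert b' B)).card < ((insert b' B) + (insert b' B)).card := by
  set b := B.max' hB with hbdef
  have h0B : (0 : ℤ) ∈ B := hmin ▸ B.min'_mem hB
  have hb0 : (0 : ℤ) ≤ b := B.le_max' 0 h0B
  have hxb : ∀ x ∈ B, x ≤ b := fun x hx => B.le_max' x hx
  have hx0 : ∀ x ∈ B, 0 ≤ x := fun x hx => hmin ▸ B.min'_le x hx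
  have hb'B : b' ∉ B := fun h => absurd (hxb b' h) (by linarith)
  have hcard1 : (insert b' B).card = ℓ + 1 := by
    rw [Finset.card_insert_of_notMem hb'B, hcard]
  refine ⟨hcard1, ?_⟩
  -- difference set upper bound
  set I1 := B.image (fun x => b' - x) with hI1
  set I2 := B.image (fun x => x - b') with hI2
  have hsubD : (insert b' B) - (insert b' B) ⊆ (B - B) ∪ (I1 ∪ I2) := by
    intro z hz
    rw [Finset.mem_sub] at hz
    obtain ⟨x, hx, y, hy, rfl⟩ := hz
    simp only [Finset.mem_insert] at hx hy
    rcases hx with rfl | hx <;> rcases hy with rfl | hy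
    · exact Finset.mem_union_left _ (by simpa using Finset.sub_mem_sub h0B h0B)
    · exact Finset.mem_union_right _ (Finset.mem_union_left _
        (Finset.mem_image.2 ⟨y, hy, rfl⟩))
    · exact Finset.mem_union_right _ (Finset.mem_union_right _
        (Finset.mem_image.2 ⟨x, hx, rfl⟩))
    · exact Finset.mem_union_left _ (Finset.sub_mem_sub hx hy)
  have hDcard : ((insert b' B) - (insert b' B)).card ≤ (B - B).card + (ℓ + ℓ) := by
    calc ((insert b' B) - (insert b' B)).card ≤ ((B - B) ∪ (I1 ∪ I2)).card :=
          Finset.card_le_card hsubD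
      _ ≤ (B - B).card + (I1 ∪ I2).card := Finset.card_union_le _ _
      _ ≤ (B - B).card + (I1.card + I2.card) := by
          exact Nat.add_le_add_left (Finset.card_union_le _ _) _
      _ ≤ (B - B).card + (ℓ + ℓ) := by
          have h1 : I1.card ≤ ℓ := hcard ▸ Finset.card_image_le
          have h2 : I2.card ≤ ℓ := hcard ▸ Finset.card_image_le
          exact Nat.add_le_add_left (Nat.add_le_add h1 h2) _
  -- sumset lower bound
  set J := B.image (fun x => b' + x) with hJ
  have hJcard : J.card = ℓ := by
    rw [hJ, Finset.card_image_of_injective _ (add_right_injective b'), hcard]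
  have hJmem : ∀ z ∈ J, 2 * b < z ∧ z < 2 * b' := by
    intro z hz
    rw [hJ, Finset.mem_image] at hz
    obtain ⟨x, hx, rfl⟩ := hz
    have := hx0 x hx
    have := hxb x hx
    constructor <;> linarith
  have hBBmem : ∀ z ∈ B + B, z ≤ 2 * b := by
    intro z hz
    rw [Finset.mem_add] at hz
    obtain ⟨x, hx, y, hy, rfl⟩ := hz
    have := hxb x hx
    have := hxb y hy
    linarith
  have hd1 : Disjoint (B + B) (J ∪ {2 * b'}) := by
    rw [Finset.disjoint_left]
    intro z hz hz'
    have h1 := hBBmem z hz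
    rcases Finset.mem_union.1 hz' with h | h
    · exact absurd (hJmem z h).1 (by linarith)
    · rw [Finset.mem_singleton] at h
      subst h
      linarith
  have hd2 : Disjoint J ({2 * b'} : Finset ℤ) := by
    rw [Finset.disjoint_left]
    intro z hz hz'
    rw [Finset.mem_singleton] at hz'
    subst hz'
    exact absurd (hJmem _ hz).2 (lt_irrefl _)
  have hsubS : (B + B) ∪ (J ∪ {2 * b'}) ⊆ (insert b' B) + (insert b' B) := by
    intro z hz
    rcases Finset.mem_union.1 hz with h | h
    · rw [Finset.mem_add] at h ⊢
      obtain ⟨x, hx, y, hy, rfl⟩ := h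
      exact ⟨x, Finset.mem_insert_of_mem hx, y, Finset.mem_insert_of_mem hy, rfl⟩
    · rcases Finset.mem_union.1 h with h | h
      · rw [hJ, Finset.mem_image] at h
        obtain ⟨x, hx, rfl⟩ := h
        rw [Finset.mem_add]
        exact ⟨b', Finset.mem_insert_self _ _, x, Finset.mem_insert_of_mem hx, rfl⟩
      · rw [Finset.mem_singleton] at h
        subst h
        rw [Finset.mem_add]
        exact ⟨b', Finset.mem_insert_self _ _, b', Finset.mem_insert_self _ _, by ring⟩
  have hScard : (B + B).card + (ℓ + 1) ≤ ((insert b' B) + (insert b' B)).card := by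
    have := Finset.card_le_card hsubS
    rw [Finset.card_union_of_disjoint hd1, Finset.card_union_of_disjoint hd2,
      hJcard, Finset.card_singleton] at this
    exact this
  omega
end

section
/- Let A be a nonempty finite set of nonnegative integers with maximum a*, let m > 2a* be a positive integer, let n ≥ 1, and let B = {Σ_{i=0}^{n-1} a_i m^i : a_i ∈ A for all i}. Then |B + B| = |A + A|^n. -/
open Pointwise

lemma base_inj_aux (m : ℤ) (hm : 0 < m) : ∀ (n : ℕ) (c d : Fin n → ℤ),
    (∀ i, 0 ≤ c i ∧ c i < m) → (∀ i, 0 ≤ d i ∧ d i < m) →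
    (∑ i, c i * m ^ (i : ℕ)) = ∑ i, d i * m ^ (i : ℕ) → c = d := by
  intro n
  induction n with
  | zero => intro c d _ _ _; funext i; exact i.elim0
  | succ k ih =>
    intro c d hc hd heq
    rw [Fin.sum_univ_succ, Fin.sum_univ_succ] at heq
    simp only [Fin.val_succ, pow_succ, Fin.val_zero, pow_zero, mul_one] at heq
    have hrw : ∀ (e : Fin (k + 1) → ℤ),
        (∑ i : Fin k, e i.succ * (m ^ (i : ℕ) * m))
          = (∑ i : Fin k, e i.succ * m ^ (i : ℕ)) * m := by
      intro e
      rw [Finset.sum_mul]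
      exact Finset.sum_congr rfl fun i _ => by ring
    rw [hrw c, hrw d] at heq
    set S := ∑ i : Fin k, c i.succ * m ^ (i : ℕ) with hS
    set T := ∑ i : Fin k, d i.succ * m ^ (i : ℕ) with hT
    have h0 : c 0 = d 0 := by
      have hdvd : m ∣ (c 0 - d 0) := ⟨T - S, by linarith⟩
      have habs : |c 0 - d 0| < m := by
        have := hc 0; have := hd 0
        rw [abs_lt]; constructor <;> linarith
      have := Int.eq_zero_of_abs_lt_dvd hdvd habs
      linarith
    have hST : S = T := by
      have : S * m = T * m := by linarith
      exact mul_right_cancel₀ (ne_of_gt hm) this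
    have htail : (fun i : Fin k => c i.succ) = (fun i : Fin k => d i.succ) :=
      ih _ _ (fun i => hc i.succ) (fun i => hd i.succ) (by rw [← hS, ← hT, hST])
    funext i
    refine Fin.cases h0 (fun j => ?_) i
    exact congrFun htail j

theorem stmt_15 (A : Finset ℤ) (hA : A.Nonempty) (hpos : ∀ a ∈ A, 0 ≤ a)
    (m : ℤ) (hm : 2 * A.max' hA < m) (n : ℕ) (hn : 1 ≤ n)
    (B : Finset ℤ)
    (hB : B = (Fintype.piFinset fun _ : Fin n => A).image
      (fun a => ∑ i : Fin n, a i * m ^ (i : ℕ))) :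
    (B + B).card = (A + A).card ^ n := by
  have hmax0 : 0 ≤ A.max' hA := hpos _ (A.max'_mem hA)
  have hm0 : 0 < m := by linarith
  have hbound : ∀ c ∈ A + A, 0 ≤ c ∧ c < m := by
    intro c hc
    rw [Finset.mem_add] at hc
    obtain ⟨a, ha, b, hb, rfl⟩ := hc
    have h1 := Finset.le_max' A a ha
    have h2 := Finset.le_max' A b hb
    have h3 := hpos a ha
    have h4 := hpos b hb
    constructor <;> linarith
  have hBB : B + B = (Fintype.piFinset fun _ : Fin n => A + A).image
      (fun a => ∑ i : Fin n, a i * m ^ (i : ℕ)) := by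
    ext x
    simp only [Finset.mem_add, Finset.mem_image, Fintype.mem_piFinset, hB]
    constructor
    · rintro ⟨y, ⟨a, ha, rfl⟩, z, ⟨b, hb, rfl⟩, rfl⟩
      refine ⟨a + b, fun i => ⟨a i, ha i, b i, hb i, rfl⟩, ?_⟩
      simp [add_mul, Finset.sum_add_distrib]
    · rintro ⟨c, hc, rfl⟩
      choose a ha b hb hab using hc
      refine ⟨∑ i : Fin n, a i * m ^ (i : ℕ), ⟨a, ha, rfl⟩,
        ∑ i : Fin n, b i * m ^ (i : ℕ), ⟨b, hb, rfl⟩, ?_⟩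
      rw [← Finset.sum_add_distrib]
      exact Finset.sum_congr rfl fun i _ => by rw [← hab i]; ring
  rw [hBB, Finset.card_image_of_injOn, Fintype.card_piFinset]
  · simp
  · intro c hc d hd heq
    simp only [Finset.mem_coe, Fintype.mem_piFinset] at hc hd
    exact base_inj_aux m hm0 n c d (fun i => hbound _ (hc i)) (fun i => hbound _ (hd i)) heq
end

section
/- Let A be a nonempty finite set of nonnegative integers with maximum a*, let m > 2a* be a positive integer, let n ≥ 1, and let B = {Σ_{i=0}^{n-1} a_i m^i : a_i ∈ A for all i}. Then |B - B| = |A - A|^n. -/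
open Pointwise

/-- If all digits have absolute value < m and the m-adic sum is 0, all digits are 0. -/
lemma digits_zero (m : ℤ) (hm0 : 0 < m) :
    ∀ (n : ℕ) (c : ℕ → ℤ), (∀ i < n, |c i| < m) →
      (∑ i ∈ Finset.range n, c i * m ^ i) = 0 → ∀ i < n, c i = 0 := by
  intro n
  induction n with
  | zero => intro c _ _ i hi; omega
  | succ n ih =>
    intro c hc hsum i hi
    have hsum' : c 0 + m * ∑ i ∈ Finset.range n, c (i + 1) * m ^ i = 0 := by
      have e1 : ∀ x ∈ Finset.range n, c (x + 1) * m ^ (x + 1) = m * (c (x + 1) * m ^ x) := by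
        intros; ring
      rw [← hsum, Finset.sum_range_succ', Finset.sum_congr rfl e1, ← Finset.mul_sum]
      ring
    have hc0 : c 0 = 0 := by
      have hdvd : m ∣ c 0 := ⟨-(∑ i ∈ Finset.range n, c (i + 1) * m ^ i), by linarith⟩
      have := hc 0 (by omega)
      rcases hdvd with ⟨k, hk⟩
      rw [hk] at this ⊢
      rw [abs_mul, abs_of_pos hm0] at this
      have hk1 : |k| < 1 := by nlinarith
      rw [abs_lt] at hk1
      have : k = 0 := by omega
      rw [this, mul_zero]
    have hrest : (∑ i ∈ Finset.range n, c (i + 1) * m ^ i) = 0 := by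
      have : m * ∑ i ∈ Finset.range n, c (i + 1) * m ^ i = 0 := by linarith
      exact (mul_eq_zero.mp this).resolve_left (by positivity)
    rcases Nat.eq_zero_or_pos i with h0 | h0
    · rw [h0]; exact hc0
    · obtain ⟨j, rfl⟩ : ∃ j, i = j + 1 := ⟨i - 1, by omega⟩
      exact ih (fun i => c (i + 1)) (fun i hi => hc (i + 1) (by omega)) hrest j (by omega)

theorem stmt_16 (A : Finset ℤ) (hA : A.Nonempty) (hpos : ∀ a ∈ A, 0 ≤ a)
    (m : ℤ) (hm : 2 * A.max' hA < m) (n : ℕ) (hn : 1 ≤ n)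
    (B : Finset ℤ)
    (hB : B = (Fintype.piFinset fun _ : Fin n => A).image
      (fun a => ∑ i : Fin n, a i * m ^ (i : ℕ))) :
    (B - B).card = (A - A).card ^ n := by
  set a' := A.max' hA with ha'
  have ha'0 : 0 ≤ a' := hpos _ (A.max'_mem hA)
  have hm0 : 0 < m := by linarith
  have habs : ∀ x ∈ A - A, |x| ≤ a' := by
    intro x hx
    rw [Finset.mem_sub] at hx
    obtain ⟨b, hb, c, hc, rfl⟩ := hx
    have hb1 := hpos b hb
    have hc1 := hpos c hc
    have hb2 := A.le_max' b hb
    have hc2 := A.le_max' c hc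
    rw [abs_le]; constructor <;> linarith
  -- B - B is the image of (A-A)-tuples
  have key : B - B = (Fintype.piFinset fun _ : Fin n => A - A).image
      (fun a => ∑ i : Fin n, a i * m ^ (i : ℕ)) := by
    ext x
    simp only [Finset.mem_sub, hB, Finset.mem_image, Fintype.mem_piFinset]
    constructor
    · rintro ⟨b, hb, c, hc, rfl⟩
      obtain ⟨f, hf, rfl⟩ := hb
      obtain ⟨g, hg, rfl⟩ := hc
      refine ⟨fun i => f i - g i, fun i => ⟨f i, hf i, g i, hg i, rfl⟩, ?_⟩
      rw [← Finset.sum_sub_distrib]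
      congr 1; ext i; ring
    · rintro ⟨d, hd, rfl⟩
      choose p hp q hq hpq using hd
      refine ⟨∑ i : Fin n, p i * m ^ (i : ℕ), ⟨p, hp, rfl⟩,
        ∑ i : Fin n, q i * m ^ (i : ℕ), ⟨q, hq, rfl⟩, ?_⟩
      rw [← Finset.sum_sub_distrib]
      congr 1; ext i; rw [← hpq i]; ring
  rw [key]
  rw [Finset.card_image_of_injOn, Fintype.card_piFinset]
  · simp
  · intro d hd e he hde
    simp only [Finset.mem_coe, Fintype.mem_piFinset] at hd he
    simp only at hde
    have hzero : (∑ i ∈ Finset.range n, (fun j => if h : j < n then d ⟨j, h⟩ - e ⟨j, h⟩ else 0) i * m ^ i) = 0 := by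
      rw [← Fin.sum_univ_eq_sum_range (fun j => (if h : j < n then d ⟨j, h⟩ - e ⟨j, h⟩ else 0) * m ^ j) n]
      have heq : ∀ i : Fin n, (if h : (i : ℕ) < n then d ⟨(i : ℕ), h⟩ - e ⟨(i : ℕ), h⟩ else 0) * m ^ (i : ℕ)
          = d i * m ^ (i : ℕ) - e i * m ^ (i : ℕ) := by
        intro i
        rw [dif_pos i.isLt]
        simp only [Fin.eta]
        ring
      rw [Finset.sum_congr rfl (fun i _ => heq i), Finset.sum_sub_distrib]
      omega
    have hall := digits_zero m hm0 n _ (fun i hi => by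
      simp only [dif_pos hi]
      have h1 := habs _ (hd ⟨i, hi⟩)
      have h2 := habs _ (he ⟨i, hi⟩)
      have : |d ⟨i, hi⟩ - e ⟨i, hi⟩| ≤ |d ⟨i, hi⟩| + |e ⟨i, hi⟩| := abs_sub _ _
      · linarith) hzero
    funext i
    have := hall i i.isLt
    simp only [dif_pos i.isLt, Fin.eta] at this
    omega
end

section
/- If there exists an MSTD set of integers of cardinality k, then for every integer n ≥ k there exist infinitely many pairwise affinely inequivalent MSTD sets of integers of cardinality k^n + 1. -/
open Pointwise

/-- Two finite sets of integers are affinely equivalent. -/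
def AffEquiv (A B : Finset ℤ) : Prop :=
  ∃ l μ : ℤ, l ≠ 0 ∧ (B = A.image (fun a => l * a + μ) ∨ A = B.image (fun b => l * b + μ))

namespace MSTDAux

open Finset

/-! ### Scaled sums (base expansion) -/

def scaleAdd (b : ℤ) (X Y : Finset ℤ) : Finset ℤ := X + Y.image (fun y => b * y)

lemma mem_scaleAdd {b z : ℤ} {X Y : Finset ℤ} :
    z ∈ scaleAdd b X Y ↔ ∃ x ∈ X, ∃ y ∈ Y, x + b * y = z := by
  simp only [scaleAdd, Finset.mem_add, Finset.mem_image]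
  constructor
  · rintro ⟨x, hx, w, ⟨y, hy, rfl⟩, h⟩; exact ⟨x, hx, y, hy, h⟩
  · rintro ⟨x, hx, y, hy, h⟩; exact ⟨x, hx, b * y, ⟨y, hy, rfl⟩, h⟩

lemma scaleAdd_add (b : ℤ) (X X' Y Y' : Finset ℤ) :
    scaleAdd b X Y + scaleAdd b X' Y' = scaleAdd b (X + X') (Y + Y') := by
  ext z
  simp only [Finset.mem_add, mem_scaleAdd]
  constructor
  · rintro ⟨u, ⟨x, hx, y, hy, rfl⟩, v, ⟨x', hx', y', hy', rfl⟩, rfl⟩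
    exact ⟨x + x', ⟨x, hx, x', hx', rfl⟩, y + y', ⟨y, hy, y', hy', rfl⟩, by ring⟩
  · rintro ⟨u, ⟨x, hx, x', hx', rfl⟩, v, ⟨y, hy, y', hy', rfl⟩, rfl⟩
    exact ⟨x + b * y, ⟨x, hx, y, hy, rfl⟩, x' + b * y', ⟨x', hx', y', hy', rfl⟩, by ring⟩

lemma scaleAdd_sub (b : ℤ) (X X' Y Y' : Finset ℤ) :
    scaleAdd b X Y - scaleAdd b X' Y' = scaleAdd b (X - X') (Y - Y') := by
  ext z
  simp only [Finset.mem_sub, mem_scaleAdd]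
  constructor
  · rintro ⟨u, ⟨x, hx, y, hy, rfl⟩, v, ⟨x', hx', y', hy', rfl⟩, rfl⟩
    exact ⟨x - x', ⟨x, hx, x', hx', rfl⟩, y - y', ⟨y, hy, y', hy', rfl⟩, by ring⟩
  · rintro ⟨u, ⟨x, hx, x', hx', rfl⟩, v, ⟨y, hy, y', hy', rfl⟩, rfl⟩
    exact ⟨x + b * y, ⟨x, hx, y, hy, rfl⟩, x' + b * y', ⟨x', hx', y', hy', rfl⟩, by ring⟩

lemma card_scaleAdd {b l u : ℤ} {X Y : Finset ℤ} (hb : 0 < b) (hX : X ⊆ Icc l u)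
    (hlt : u - l < b) : (scaleAdd b X Y).card = X.card * Y.card := by
  have heq : scaleAdd b X Y = (X ×ˢ Y).image (fun p => p.1 + b * p.2) := by
    ext z
    simp only [mem_scaleAdd, Finset.mem_image, Finset.mem_product]
    constructor
    · rintro ⟨x, hx, y, hy, h⟩; exact ⟨(x, y), ⟨hx, hy⟩, h⟩
    · rintro ⟨⟨x, y⟩, ⟨hx, hy⟩, h⟩; exact ⟨x, hx, y, hy, h⟩
  rw [heq, Finset.card_image_of_injOn, Finset.card_product]
  rintro ⟨x, y⟩ hxy ⟨x', y'⟩ hxy' h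
  simp only [Finset.mem_coe, Finset.mem_product] at hxy hxy'
  have h1 := hX hxy.1; have h2 := hX hxy'.1
  simp only [Finset.mem_Icc] at h1 h2
  simp only at h
  have hy : y = y' := by
    rcases lt_trichotomy y y' with hlt' | rfl | hlt'
    · have : b * (y' - y) ≥ b * 1 := by
        apply mul_le_mul_of_nonneg_left _ hb.le; omega
      nlinarith
    · rfl
    · have : b * (y - y') ≥ b * 1 := by
        apply mul_le_mul_of_nonneg_left _ hb.le; omega
      nlinarith
  subst hy
  have : x = x' := by omega
  simp [this]

/-! ### Affine invariants -/

def P2 (T : Finset ℤ) : ℤ := ∑ a ∈ T, ∑ b ∈ T, (a - b) ^ 2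

def Dm (T : Finset ℤ) : ℕ := (T ×ˢ T).sup (fun p => (p.1 - p.2).natAbs)

lemma P2_nonneg (T : Finset ℤ) : 0 ≤ P2 T := by
  apply Finset.sum_nonneg; intro a _; apply Finset.sum_nonneg; intro b _; positivity

lemma affineInj {l : ℤ} (hl : l ≠ 0) (μ : ℤ) :
    Function.Injective (fun a : ℤ => l * a + μ) := by
  intro a b h; simp only at h
  have : l * a = l * b := by omega
  exact mul_left_cancel₀ hl this

lemma P2_image {l μ : ℤ} (hl : l ≠ 0) (T : Finset ℤ) :
    P2 (T.image (fun a => l * a + μ)) = l ^ 2 * P2 T := by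
  unfold P2
  rw [Finset.sum_image (fun a _ b _ h => affineInj hl μ h), Finset.mul_sum]
  apply Finset.sum_congr rfl; intro a _
  rw [Finset.sum_image (fun a _ b _ h => affineInj hl μ h), Finset.mul_sum]
  apply Finset.sum_congr rfl; intro b _
  ring

lemma Dm_image {l μ : ℤ} (hl : l ≠ 0) (T : Finset ℤ) :
    Dm (T.image (fun a => l * a + μ)) = l.natAbs * Dm T := by
  have key : ∀ a b : ℤ, ((l * a + μ) - (l * b + μ)).natAbs = l.natAbs * (a - b).natAbs := by
    intro a b
    have : (l * a + μ) - (l * b + μ) = l * (a - b) := by ring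
    rw [this, Int.natAbs_mul]
  apply le_antisymm
  · apply Finset.sup_le
    rintro ⟨u, v⟩ huv
    simp only [Finset.mem_product, Finset.mem_image] at huv
    obtain ⟨⟨a, ha, rfl⟩, ⟨b, hb, rfl⟩⟩ := huv
    rw [key]
    have hmem : ((a, b) : ℤ × ℤ) ∈ T ×ˢ T := Finset.mem_product.2 ⟨ha, hb⟩
    have : (a - b).natAbs ≤ Dm T := Finset.le_sup (f := fun p : ℤ × ℤ => (p.1 - p.2).natAbs) hmem
    exact Nat.mul_le_mul_left _ this
  · have : l.natAbs * Dm T = (T ×ˢ T).sup (fun p : ℤ × ℤ => l.natAbs * (p.1 - p.2).natAbs) := by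
      apply Finset.comp_sup_eq_sup_comp (fun m => l.natAbs * m)
      · intro x y
        rcases le_total x y with h | h
        · rw [max_eq_right h, max_eq_right (Nat.mul_le_mul_left _ h)]
        · rw [max_eq_left h, max_eq_left (Nat.mul_le_mul_left _ h)]
      · simp
    rw [this]
    apply Finset.sup_le
    rintro ⟨u, v⟩ huv
    simp only [Finset.mem_product] at huv
    rw [← key]
    have hmem : ((l * u + μ, l * v + μ) : ℤ × ℤ) ∈
        (T.image fun a => l * a + μ) ×ˢ (T.image fun a => l * a + μ) :=
      Finset.mem_product.2 ⟨Finset.mem_image_of_mem (fun a => l * a + μ) huv.1,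
        Finset.mem_image_of_mem (fun a => l * a + μ) huv.2⟩
    exact Finset.le_sup (f := fun p : ℤ × ℤ => (p.1 - p.2).natAbs) hmem

lemma Dm_insert {S : Finset ℤ} {x : ℤ} (h0 : (0:ℤ) ∈ S)
    (hub : ∀ s ∈ insert x S, 0 ≤ s ∧ s ≤ x) : (Dm (insert x S) : ℤ) = x := by
  have hx0 : 0 ≤ x := ((hub 0 (Finset.mem_insert_of_mem h0)).2)
  have : Dm (insert x S) = x.toNat := by
    apply le_antisymm
    · apply Finset.sup_le
      rintro ⟨u, v⟩ huv
      simp only [Finset.mem_product] at huv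
      have h1 := hub u huv.1; have h2 := hub v huv.2
      simp only
      omega
    · have hmem : ((x, 0) : ℤ × ℤ) ∈ (insert x S) ×ˢ (insert x S) :=
        Finset.mem_product.2 ⟨Finset.mem_insert_self x S, Finset.mem_insert_of_mem h0⟩
      have := Finset.le_sup (f := fun p : ℤ × ℤ => (p.1 - p.2).natAbs) hmem
      simp only at this
      calc x.toNat = (x - 0).natAbs := by omega
        _ ≤ _ := this
  rw [this]; omega

/-! ### Insert decompositions -/

lemma insert_add_insert {S : Finset ℤ} {x : ℤ} :
    (insert x S) + (insert x S) = insert (x + x) ((S + S) ∪ S.image (fun s => x + s)) := by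
  ext z
  simp only [Finset.mem_add, Finset.mem_insert, Finset.mem_union, Finset.mem_image]
  constructor
  · rintro ⟨a, (rfl | ha), b, (rfl | hb), rfl⟩
    · exact Or.inl rfl
    · exact Or.inr (Or.inr ⟨b, hb, rfl⟩)
    · exact Or.inr (Or.inr ⟨a, ha, by ring⟩)
    · exact Or.inr (Or.inl ⟨a, ha, b, hb, rfl⟩)
  · rintro (rfl | ⟨a, ha, b, hb, rfl⟩ | ⟨s, hs, rfl⟩)
    · exact ⟨x, Or.inl rfl, x, Or.inl rfl, rfl⟩
    · exact ⟨a, Or.inr ha, b, Or.inr hb, rfl⟩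
    · exact ⟨x, Or.inl rfl, s, Or.inr hs, rfl⟩

lemma insert_sub_insert {S : Finset ℤ} {x : ℤ} (hS : S.Nonempty) :
    (insert x S) - (insert x S) =
      ((S - S) ∪ S.image (fun s => x - s)) ∪ S.image (fun s => s - x) := by
  obtain ⟨s0, hs0⟩ := hS
  ext z
  simp only [Finset.mem_sub, Finset.mem_insert, Finset.mem_union, Finset.mem_image]
  constructor
  · rintro ⟨a, (rfl | ha), b, (rfl | hb), rfl⟩
    · exact Or.inl (Or.inl ⟨s0, hs0, s0, hs0, by ring⟩)
    · exact Or.inl (Or.inr ⟨b, hb, rfl⟩)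
    · exact Or.inr ⟨a, ha, rfl⟩
    · exact Or.inl (Or.inl ⟨a, ha, b, hb, rfl⟩)
  · rintro ((⟨a, ha, b, hb, rfl⟩ | ⟨s, hs, rfl⟩) | ⟨s, hs, rfl⟩)
    · exact ⟨a, Or.inr ha, b, Or.inr hb, rfl⟩
    · exact ⟨x, Or.inl rfl, s, Or.inr hs, rfl⟩
    · exact ⟨s, Or.inr hs, x, Or.inl rfl, rfl⟩

/-! ### Translation -/

lemma image_addc_add (A : Finset ℤ) (c : ℤ) :
    (A.image (fun a => a + c)) + (A.image (fun a => a + c)) =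
      (A + A).image (fun z => z + (c + c)) := by
  ext z
  simp only [Finset.mem_add, Finset.mem_image]
  constructor
  · rintro ⟨u, ⟨a, ha, rfl⟩, v, ⟨b, hb, rfl⟩, rfl⟩
    exact ⟨a + b, ⟨a, ha, b, hb, rfl⟩, by ring⟩
  · rintro ⟨w, ⟨a, ha, b, hb, rfl⟩, rfl⟩
    exact ⟨a + c, ⟨a, ha, rfl⟩, b + c, ⟨b, hb, rfl⟩, by ring⟩

lemma image_addc_sub (A : Finset ℤ) (c : ℤ) :
    (A.image (fun a => a + c)) - (A.image (fun a => a + c)) = A - A := by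
  ext z
  simp only [Finset.mem_sub, Finset.mem_image]
  constructor
  · rintro ⟨u, ⟨a, ha, rfl⟩, v, ⟨b, hb, rfl⟩, rfl⟩
    exact ⟨a, ha, b, hb, by ring⟩
  · rintro ⟨a, ha, b, hb, rfl⟩
    exact ⟨a + c, ⟨a, ha, rfl⟩, b + c, ⟨b, hb, rfl⟩, by ring⟩

/-! ### Numeric lemmas -/

lemma binom_aux (d m : ℕ) : d ^ (m + 1) + (m + 1) * d ^ m ≤ (d + 1) ^ (m + 1) := by
  induction m with
  | zero => simp [pow_succ]
  | succ m ih =>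
      have hp1 : d ^ (m + 2) = d ^ (m + 1) * d := pow_succ d (m + 1)
      have hp2 : d ^ (m + 1) = d ^ m * d := pow_succ d m
      show d ^ (m + 2) + (m + 2) * d ^ (m + 1) ≤ (d + 1) ^ (m + 2)
      calc d ^ (m + 2) + (m + 2) * d ^ (m + 1)
          ≤ (d ^ (m + 1) + (m + 1) * d ^ m) * (d + 1) := by nlinarith [Nat.zero_le (d ^ m)]
        _ ≤ (d + 1) ^ (m + 1) * (d + 1) := Nat.mul_le_mul_right _ ih
        _ = (d + 1) ^ (m + 2) := (pow_succ _ _).symm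

lemma pow_gap {d k n : ℕ} (hd : k ≤ d) (hn : k ≤ n) (hk : 2 ≤ k) :
    d ^ n + k ^ n ≤ (d + 1) ^ n := by
  obtain ⟨m, rfl⟩ : ∃ m, n = m + 1 := ⟨n - 1, by omega⟩
  have h1 : k ^ (m + 1) ≤ (m + 1) * d ^ m := by
    calc k ^ (m + 1) = k * k ^ m := by ring
    _ ≤ (m + 1) * d ^ m := Nat.mul_le_mul (by omega) (Nat.pow_le_pow_left hd m)
  have := binom_aux d m
  omega

lemma sum_sq_expand (S : Finset ℤ) (x : ℤ) :
    ∑ s ∈ S, (x - s) ^ 2 = (S.card : ℤ) * x ^ 2 - 2 * (∑ s ∈ S, s) * x + ∑ s ∈ S, s ^ 2 := by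
  have : ∀ s ∈ S, (x - s) ^ 2 = x ^ 2 - 2 * x * s + s ^ 2 := fun s _ => by ring
  rw [Finset.sum_congr rfl this]
  rw [Finset.sum_add_distrib, Finset.sum_sub_distrib, Finset.sum_const, ← Finset.mul_sum]
  ring

lemma P2_insert {S : Finset ℤ} {x : ℤ} (hx : x ∉ S) :
    P2 (insert x S) = P2 S + 2 * ∑ s ∈ S, (x - s) ^ 2 := by
  unfold P2
  rw [Finset.sum_insert hx]
  simp only [Finset.sum_insert hx]
  rw [Finset.sum_add_distrib]
  have h1 : ∑ a ∈ S, (a - x) ^ 2 = ∑ a ∈ S, (x - a) ^ 2 :=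
    Finset.sum_congr rfl fun a _ => by ring
  rw [h1]
  ring

end MSTDAux

open MSTDAux Finset

theorem stmt_18 (k : ℕ)
    (hex : ∃ A : Finset ℤ, A.card = k ∧ (A - A).card < (A + A).card)
    (n : ℕ) (hn : k ≤ n) :
    ∃ f : ℕ → Finset ℤ,
      (∀ i : ℕ, (f i).card = k ^ n + 1 ∧ ((f i) - (f i)).card < ((f i) + (f i)).card) ∧
      (∀ i j : ℕ, i ≠ j → ¬ AffEquiv (f i) (f j)) := by
  obtain ⟨A, hAk, hAlt⟩ := hex
  -- A is nonempty, k ≥ 2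
  have hAne : A.Nonempty := by
    rcases A.eq_empty_or_nonempty with rfl | h
    · simp at hAlt
    · exact h
  have hk2 : 2 ≤ k := by
    have h1 : 1 ≤ (A - A).card := Finset.card_pos.2 (hAne.sub hAne)
    have h2 : (A + A).card ≤ k * k := by
      calc (A + A).card ≤ A.card * A.card := Finset.card_add_le
        _ = k * k := by rw [hAk]
    nlinarith
  have hn2 : 2 ≤ n := le_trans hk2 hn
  -- translate A so that min = 0
  set a0 := A.min' hAne with ha0
  set C : ℤ := A.max' hAne - a0 with hCdef
  have hC0 : 0 ≤ C := by
    have := A.min'_le (A.max' hAne) (A.max'_mem hAne)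
    omega
  set A' := A.image (fun a => a + (-a0)) with hA'def
  have hA'card : A'.card = k := by
    rw [hA'def, Finset.card_image_of_injective _ (add_left_injective _), hAk]
  have hA'sub : A' ⊆ Icc 0 C := by
    intro z hz
    rw [hA'def, Finset.mem_image] at hz
    obtain ⟨a, ha, rfl⟩ := hz
    have h1 := A.min'_le a ha
    have h2 := A.le_max' a ha
    rw [Finset.mem_Icc]; omega
  have h0A' : (0:ℤ) ∈ A' := by
    rw [hA'def, Finset.mem_image]
    exact ⟨a0, A.min'_mem hAne, by ring⟩
  set s := (A + A).card with hs
  set d := (A - A).card with hd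
  have hA'sum : (A' + A').card = s := by
    rw [hA'def, image_addc_add, Finset.card_image_of_injective _ (add_left_injective _)]
  have hA'diff : (A' - A').card = d := by rw [hA'def, image_addc_sub]
  -- d ≥ k
  have hdk : k ≤ d := by
    have hsub : A' ⊆ A - A := by
      intro z hz
      rw [hA'def, Finset.mem_image] at hz
      obtain ⟨a, ha, rfl⟩ := hz
      exact Finset.mem_sub.2 ⟨a, ha, a0, A.min'_mem hAne, by ring⟩
    calc k = A'.card := hA'card.symm
      _ ≤ (A - A).card := Finset.card_le_card hsub
  have hds : d + 1 ≤ s := hAlt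
  -- the base
  set b : ℤ := 2 * C + 2 with hbdef
  have hbpos : 0 < b := by omega
  -- bounds for sum and difference sets of A'
  have hA'sumsub : A' + A' ⊆ Icc 0 (2 * C) := by
    intro z hz
    rw [Finset.mem_add] at hz
    obtain ⟨u, hu, v, hv, rfl⟩ := hz
    have h1 := hA'sub hu; have h2 := hA'sub hv
    rw [Finset.mem_Icc] at *; omega
  have hA'diffsub : A' - A' ⊆ Icc (-C) C := by
    intro z hz
    rw [Finset.mem_sub] at hz
    obtain ⟨u, hu, v, hv, rfl⟩ := hz
    have h1 := hA'sub hu; have h2 := hA'sub hv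
    rw [Finset.mem_Icc] at *; omega
  -- the iterated construction
  set T : ℕ → Finset ℤ := fun j => Nat.rec {0} (fun _ prev => scaleAdd b A' prev) j with hTdef
  have hTsucc : ∀ j, T (j+1) = scaleAdd b A' (T j) := fun j => rfl
  have key : ∀ j : ℕ, (T j).card = k ^ j ∧ ((T j) + (T j)).card = s ^ j ∧
      ((T j) - (T j)).card = d ^ j ∧ (T j ⊆ Icc 0 (b ^ j - 1)) ∧ (0:ℤ) ∈ T j := by
    intro j
    induction j with
    | zero =>
        have hT0 : T 0 = {0} := rfl
        refine ⟨by rw [hT0]; simp, ?_, ?_, ?_, by rw [hT0]; simp⟩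
        · rw [hT0, Finset.singleton_add_singleton]; simp
        · rw [hT0, Finset.singleton_sub_singleton]; simp
        · rw [hT0]; intro z hz; simp at hz; subst hz; simp
    | succ j ih =>
        obtain ⟨hc, hsum, hdiff, hsub, h0⟩ := ih
        refine ⟨?_, ?_, ?_, ?_, ?_⟩
        · rw [hTsucc, card_scaleAdd hbpos hA'sub (by omega), hA'card, hc, pow_succ]
          ring
        · rw [hTsucc, scaleAdd_add,
            card_scaleAdd hbpos hA'sumsub (by omega), hA'sum, hsum, pow_succ]
          ring
        · rw [hTsucc, scaleAdd_sub,
            card_scaleAdd hbpos hA'diffsub (by omega), hA'diff, hdiff, pow_succ]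
          ring
        · rw [hTsucc]
          intro z hz
          rw [mem_scaleAdd] at hz
          obtain ⟨x, hx, y, hy, rfl⟩ := hz
          have h1 := hA'sub hx
          have h2 := hsub hy
          rw [Finset.mem_Icc] at *
          have hby : b * y ≤ b * (b ^ j - 1) := mul_le_mul_of_nonneg_left h2.2 hbpos.le
          have hby0 : 0 ≤ b * y := mul_nonneg hbpos.le h2.1
          have hpow : b * (b ^ j - 1) = b ^ (j+1) - b := by rw [pow_succ]; ring
      
          constructor
          · omega
          · have hCb : C ≤ b - 1 := by omega
            omega
        · rw [hTsucc, mem_scaleAdd]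
          exact ⟨0, h0A', 0, h0, by ring⟩
  -- the base set S
  obtain ⟨hScard, hSsum, hSdiff, hSsub, h0S⟩ := key n
  set S := T n with hSdef
  set B : ℤ := b ^ n - 1 with hBdef
  have hB0 : 0 ≤ B := by
    have : 0 < b ^ n := pow_pos hbpos n
    omega
  have hSbound : ∀ z ∈ S, 0 ≤ z ∧ z ≤ B := by
    intro z hz
    have := hSsub hz
    rw [Finset.mem_Icc] at this
    exact this
  have hSne : S.Nonempty := ⟨0, h0S⟩
  have hm2 : 2 ≤ k ^ n := by
    calc 2 = 2 ^ 1 := rfl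
      _ ≤ 2 ^ n := Nat.pow_le_pow_right (by norm_num) (by omega)
      _ ≤ k ^ n := Nat.pow_le_pow_left hk2 n
  -- positivity of the sum of elements of S
  set Sg1 : ℤ := ∑ t ∈ S, t with hSg1
  set Sg2 : ℤ := ∑ t ∈ S, t ^ 2 with hSg2
  have hSgpos : 1 ≤ Sg1 := by
    obtain ⟨u, hu, v, hv, huv⟩ := Finset.one_lt_card.1 (by rw [hScard]; exact hm2)
    have hb1 := hSbound u hu
    have hb2 := hSbound v hv
    rcases le_total u v with h | h
    · have hv1 : 1 ≤ v := by omega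
      have : v ≤ Sg1 := Finset.single_le_sum (fun t ht => (hSbound t ht).1) hv
      omega
    · have hu1 : 1 ≤ u := by omega
      have : u ≤ Sg1 := Finset.single_le_sum (fun t ht => (hSbound t ht).1) hu
      omega
  set R : ℤ := P2 S + 2 * Sg2 with hR
  have hR0 : 0 ≤ R := by
    have h1 := P2_nonneg S
    have h2 : 0 ≤ Sg2 := Finset.sum_nonneg fun t _ => by positivity
    omega
  -- the far points
  set x : ℕ → ℤ := fun i => ((i:ℤ) + 3) * (B + 2 + R) with hxdef
  have hxgt : ∀ i, 2 * B < x i := by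
    intro i
    have hi : (0:ℤ) ≤ (i:ℤ) := Int.ofNat_nonneg i
    have : (3:ℤ) * (B + 2 + R) ≤ ((i:ℤ) + 3) * (B + 2 + R) := by
      apply mul_le_mul_of_nonneg_right _ (by omega)
      omega
    show 2 * B < ((i:ℤ) + 3) * (B + 2 + R)
    linarith
  have hxR : ∀ i, R + 1 ≤ x i := by
    intro i
    have hi : (0:ℤ) ≤ (i:ℤ) := Int.ofNat_nonneg i
    have : (3:ℤ) * (B + 2 + R) ≤ ((i:ℤ) + 3) * (B + 2 + R) := by
      apply mul_le_mul_of_nonneg_right _ (by omega)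
      omega
    show R + 1 ≤ ((i:ℤ) + 3) * (B + 2 + R)
    linarith
  have hxpos : ∀ i, 0 < x i := fun i => by have := hxR i; omega
  have hxinj : ∀ i j : ℕ, i ≠ j → x i ≠ x j := by
    intro i j hij h
    rw [hxdef] at h
    simp only at h
    have hE : (B + 2 + R) ≠ 0 := by omega
    have := mul_right_cancel₀ hE h
    omega
  have hxnotin : ∀ i, x i ∉ S := by
    intro i hmem
    have h1 := (hSbound _ hmem).2
    have h2 := hxgt i
    omega
  -- the family
  refine ⟨fun i => insert (x i) S, ?_, ?_⟩
  · intro i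
    have hxS := hxnotin i
    have hxi := hxgt i
    constructor
    · rw [Finset.card_insert_of_notMem hxS, hScard]
    · -- cardinality of sum set
      have hsumcard : ((insert (x i) S) + (insert (x i) S)).card = s ^ n + k ^ n + 1 := by
        rw [insert_add_insert]
        have hSSsub : ∀ z ∈ S + S, 0 ≤ z ∧ z ≤ 2 * B := by
          intro z hz
          rw [Finset.mem_add] at hz
          obtain ⟨u, hu, v, hv, rfl⟩ := hz
          have h1 := hSbound u hu; have h2 := hSbound v hv
          omega
        have hnotmem : x i + x i ∉ (S + S) ∪ S.image (fun t => x i + t) := by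
          intro hmem
          rcases Finset.mem_union.1 hmem with h | h
          · have := hSSsub _ h; omega
          · rw [Finset.mem_image] at h
            obtain ⟨t, ht, heq⟩ := h
            have := hSbound t ht
            omega
        have hdisj : Disjoint (S + S) (S.image (fun t => x i + t)) := by
          rw [Finset.disjoint_left]
          intro z hz hz'
          rw [Finset.mem_image] at hz'
          obtain ⟨t, ht, rfl⟩ := hz'
          have h1 := hSSsub _ hz
          have h2 := hSbound t ht
          omega
        rw [Finset.card_insert_of_notMem hnotmem, Finset.card_union_of_disjoint hdisj,
          Finset.card_image_of_injective _ (add_right_injective _), hSsum, hScard]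
      have hdiffcard : ((insert (x i) S) - (insert (x i) S)).card = d ^ n + 2 * k ^ n := by
        rw [insert_sub_insert hSne]
        have hSSsub : ∀ z ∈ S - S, -B ≤ z ∧ z ≤ B := by
          intro z hz
          rw [Finset.mem_sub] at hz
          obtain ⟨u, hu, v, hv, rfl⟩ := hz
          have h1 := hSbound u hu; have h2 := hSbound v hv
          omega
        have hdisj1 : Disjoint (S - S) (S.image (fun t => x i - t)) := by
          rw [Finset.disjoint_left]
          intro z hz hz'
          rw [Finset.mem_image] at hz'
          obtain ⟨t, ht, rfl⟩ := hz'
          have h1 := hSSsub _ hz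
          have h2 := hSbound t ht
          have h3 := hxgt i
          omega
        have hdisj2 : Disjoint ((S - S) ∪ S.image (fun t => x i - t))
            (S.image (fun t => t - x i)) := by
          rw [Finset.disjoint_left]
          intro z hz hz'
          rw [Finset.mem_image] at hz'
          obtain ⟨t, ht, rfl⟩ := hz'
          have h2 := hSbound t ht
          have h3 := hxgt i
          rcases Finset.mem_union.1 hz with h | h
          · have := hSSsub _ h; omega
          · rw [Finset.mem_image] at h
            obtain ⟨t', ht', heq⟩ := h
            have := hSbound t' ht'
            omega
        rw [Finset.card_union_of_disjoint hdisj2, Finset.card_union_of_disjoint hdisj1,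
          Finset.card_image_of_injective _ sub_right_injective,
          Finset.card_image_of_injective _ sub_left_injective, hSdiff, hScard]
        ring
      rw [hsumcard, hdiffcard]
      have hgap : d ^ n + k ^ n ≤ s ^ n := by
        calc d ^ n + k ^ n ≤ (d + 1) ^ n := pow_gap hdk hn hk2
          _ ≤ s ^ n := Nat.pow_le_pow_left hds n
      omega
  · -- affine inequivalence
    intro i j hij haff
    obtain ⟨l, μ, hl, hcase⟩ := haff
    -- the invariant relation
    have hEq : P2 (insert (x j) S) * ((Dm (insert (x i) S) : ℤ)) ^ 2 =
        P2 (insert (x i) S) * ((Dm (insert (x j) S) : ℤ)) ^ 2 := by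
      have hnatsq : ((l.natAbs : ℤ)) ^ 2 = l ^ 2 := by
        rw [sq, sq, Int.natAbs_mul_self' l]
      rcases hcase with h | h
      · simp only at h
        rw [h, P2_image hl, Dm_image hl]
        push_cast
        rw [mul_pow]
        rw [sq_abs]
        ring
      · simp only at h
        rw [h, P2_image hl, Dm_image hl]
        push_cast
        rw [mul_pow]
        rw [sq_abs]
        ring
    -- compute the invariants
    have hDi : (Dm (insert (x i) S) : ℤ) = x i := by
      apply Dm_insert h0S
      intro t ht
      rcases Finset.mem_insert.1 ht with rfl | ht'
      · exact ⟨(hxpos i).le, le_refl _⟩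
      · have := hSbound t ht'
        have := hxgt i
        constructor <;> omega
    have hDj : (Dm (insert (x j) S) : ℤ) = x j := by
      apply Dm_insert h0S
      intro t ht
      rcases Finset.mem_insert.1 ht with rfl | ht'
      · exact ⟨(hxpos j).le, le_refl _⟩
      · have := hSbound t ht'
        have := hxgt j
        constructor <;> omega
    have hPi : P2 (insert (x i) S) =
        P2 S + 2 * (((k:ℤ) ^ n) * (x i) ^ 2 - 2 * Sg1 * (x i) + Sg2) := by
      rw [P2_insert (hxnotin i), sum_sq_expand, hScard]
      push_cast
      ring
    have hPj : P2 (insert (x j) S) =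
        P2 S + 2 * (((k:ℤ) ^ n) * (x j) ^ 2 - 2 * Sg1 * (x j) + Sg2) := by
      rw [P2_insert (hxnotin j), sum_sq_expand, hScard]
      push_cast
      ring
    rw [hDi, hDj, hPi, hPj] at hEq
    -- factor
    have hfac : (x i - x j) * (R * (x i + x j) - 4 * Sg1 * (x i) * (x j)) = 0 := by
      rw [hR]
      linear_combination hEq
    have h1 : x i - x j ≠ 0 := sub_ne_zero.2 (hxinj i j hij)
    have h2 : R * (x i + x j) - 4 * Sg1 * (x i) * (x j) < 0 := by
      have hxiR := hxR i
      have hxjR := hxR j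
      have hxipos := hxpos i
      have hxjpos := hxpos j
      have ha : (R + 1) * (x j) ≤ (x i) * (x j) :=
        mul_le_mul_of_nonneg_right hxiR hxjpos.le
      have hb : (R + 1) * (x i) ≤ (x j) * (x i) :=
        mul_le_mul_of_nonneg_right hxjR hxipos.le
      have hc : (1:ℤ) * ((x i) * (x j)) ≤ Sg1 * ((x i) * (x j)) := by
        apply mul_le_mul_of_nonneg_right hSgpos
        positivity
      have hd : 0 ≤ R * (x i + x j) := mul_nonneg hR0 (by positivity)
      linarith
    rcases mul_eq_zero.1 hfac with h | h
    · exact h1 h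
    · omega
end
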